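/- arXiv:2201.10117 — 2 statements merged into one kernel-verified Lean document; each statement's English description precedes it below -/
import Mathlib

section
/- For 0<q<1 and all complex x, E_q(x)·E_q(-x) = ∑_{n≥0} q^{n(n-1)/2} G_n(-1) x^n/[n]_q!, where G_n(x) = ∑_{k=0}^n [n choose k]_q q^{k²-nk} x^k. -/
/-!
Multiply the two power series by the Cauchy product (both converge absolutely for every `x`,
by the ratio test: consecutive terms have ratio `O(q^n)`). The coefficient of `x^n` is then
`∑_{j+k=n} q^{C(j,2)+C(k,2)} (-1)^k (1-q)^n / ((q;q)_j (q;q)_k)`, and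
`C(j,2) + C(k,2) = C(n,2) + k² - nk` turns it into `q^{C(n,2)} G_n(-1) / [n]_q!`.
-/

/-- The q-shifted factorial `(a;q)_n = ∏_{k=0}^{n-1} (1 - a q^k)`. -/
noncomputable def qPoch (a q : ℂ) (n : ℕ) : ℂ := ∏ k ∈ Finset.range n, (1 - a * q ^ k)

/-- The q-factorial `[n]_q! = (q;q)_n / (1-q)^n`. -/
noncomputable def qFact (q : ℂ) (n : ℕ) : ℂ := qPoch q q n / (1 - q) ^ n

/-- The Gaussian binomial coefficient. -/
noncomputable def qBinom (q : ℂ) (n k : ℕ) : ℂ :=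
  qPoch q q n / (qPoch q q k * qPoch q q (n - k))

/-- The q-exponential `E_q(x)`. -/
noncomputable def qExpE (q x : ℂ) : ℂ :=
  ∑' n : ℕ, q ^ (n * (n - 1) / 2) * (1 - q) ^ n * x ^ n / qPoch q q n

/-- Al-Salam's polynomial `G_n(x) = ∑_{k=0}^n [n,k]_q q^{k²-nk} x^k`. -/
noncomputable def alSalamG (q x : ℂ) (n : ℕ) : ℂ :=
  ∑ k ∈ Finset.range (n + 1), qBinom q n k * q ^ (k ^ 2) * (q ^ (n * k))⁻¹ * x ^ k

open Finset Filter

lemma triangle_add_triangle_add_mul (m k : ℕ) :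
    m * (m - 1) / 2 + k * (k - 1) / 2 + (m + k) * k = (m + k) * (m + k - 1) / 2 + k ^ 2 := by
  induction k with
  | zero => simp
  | succ k ih =>
    rw [← add_assoc, Nat.triangle_succ, Nat.triangle_succ]
    linear_combination ih

noncomputable def qExpTerm (q y : ℂ) (n : ℕ) : ℂ :=
  q ^ (n * (n - 1) / 2) * (1 - q) ^ n * y ^ n / qPoch q q n

lemma qExpE_eq_tsum_qExpTerm (q y : ℂ) : qExpE q y = ∑' n, qExpTerm q y n := rfl

section UnitDisc

variable {q : ℂ} (hq : ‖q‖ < 1)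
include hq

lemma one_sub_norm_le_norm_one_sub_mul_pow (k : ℕ) : 1 - ‖q‖ ≤ ‖1 - q * q ^ k‖ := by
  have hqk : ‖q * q ^ k‖ ≤ ‖q‖ := by
    rw [norm_mul, norm_pow]
    exact mul_le_of_le_one_right (norm_nonneg q) (pow_le_one₀ (norm_nonneg q) hq.le)
  calc 1 - ‖q‖ ≤ ‖(1 : ℂ)‖ - ‖q * q ^ k‖ := by rw [norm_one]; linarith
    _ ≤ ‖1 - q * q ^ k‖ := norm_sub_norm_le _ _

lemma one_sub_mul_pow_ne_zero (k : ℕ) : 1 - q * q ^ k ≠ 0 :=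
  norm_pos_iff.mp ((sub_pos.mpr hq).trans_le (one_sub_norm_le_norm_one_sub_mul_pow hq k))

lemma one_sub_ne_zero_of_norm_lt_one : 1 - q ≠ 0 := by
  simpa using one_sub_mul_pow_ne_zero hq 0

lemma qPoch_self_ne_zero (n : ℕ) : qPoch q q n ≠ 0 :=
  prod_ne_zero_iff.mpr fun k _ => one_sub_mul_pow_ne_zero hq k

lemma qExpTerm_succ (y : ℂ) (n : ℕ) :
    qExpTerm q y (n + 1) = q ^ n * (1 - q) * y / (1 - q * q ^ n) * qExpTerm q y n := by
  rw [qExpTerm, qExpTerm, Nat.triangle_succ, pow_add, qPoch, prod_range_succ, ← qPoch]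
  field_simp [qPoch_self_ne_zero hq, one_sub_mul_pow_ne_zero hq]
  ring

lemma norm_qExpTerm_succ_le (y : ℂ) (n : ℕ) :
    ‖qExpTerm q y (n + 1)‖ ≤ ‖1 - q‖ * ‖y‖ / (1 - ‖q‖) * ‖q‖ ^ n * ‖qExpTerm q y n‖ := by
  rw [qExpTerm_succ hq, norm_mul, norm_div, norm_mul, norm_mul, norm_pow]
  gcongr
  calc ‖q‖ ^ n * ‖1 - q‖ * ‖y‖ / ‖1 - q * q ^ n‖
      ≤ ‖q‖ ^ n * ‖1 - q‖ * ‖y‖ / (1 - ‖q‖) :=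
        div_le_div_of_nonneg_left (by positivity) (sub_pos.mpr hq)
          (one_sub_norm_le_norm_one_sub_mul_pow hq n)
    _ = ‖1 - q‖ * ‖y‖ / (1 - ‖q‖) * ‖q‖ ^ n := by ring

lemma summable_norm_qExpTerm (y : ℂ) : Summable fun n => ‖qExpTerm q y n‖ := by
  refine summable_of_ratio_norm_eventually_le (r := 1 / 2) (by norm_num) ?_
  have hlim : Tendsto (fun n : ℕ => ‖1 - q‖ * ‖y‖ / (1 - ‖q‖) * ‖q‖ ^ n) atTop (nhds 0) := by
    simpa using (tendsto_pow_atTop_nhds_zero_of_lt_one (norm_nonneg q) hq).const_mul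
      (‖1 - q‖ * ‖y‖ / (1 - ‖q‖))
  filter_upwards [hlim.eventually (gt_mem_nhds (by norm_num : (0 : ℝ) < 1 / 2))] with n hn
  simp only [norm_norm]
  exact (norm_qExpTerm_succ_le hq y n).trans (by gcongr)

lemma qExpTerm_mul_qExpTerm_neg (hq0 : q ≠ 0) (x : ℂ) (m k : ℕ) :
    qExpTerm q x m * qExpTerm q (-x) k =
      q ^ ((m + k) * (m + k - 1) / 2) *
        (qBinom q (m + k) k * q ^ (k ^ 2) * (q ^ ((m + k) * k))⁻¹ * (-1) ^ k) *
        x ^ (m + k) / qFact q (m + k) := by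
  have hexp : q ^ (m * (m - 1) / 2) * q ^ (k * (k - 1) / 2) * q ^ ((m + k) * k)
      = q ^ ((m + k) * (m + k - 1) / 2) * q ^ (k ^ 2) := by
    simp only [← pow_add, triangle_add_triangle_add_mul]
  rw [qExpTerm, qExpTerm, qBinom, qFact, Nat.add_sub_cancel, neg_pow]
  field_simp [qPoch_self_ne_zero hq, one_sub_ne_zero_of_norm_lt_one hq]
  linear_combination ((1 - q) ^ (m + k) * x ^ (m + k)) * hexp

end UnitDisc

/-- `E_q(x) E_q(-x) = ∑ q^{n(n-1)/2} G_n(-1) x^n/[n]_q!` for all complex `x`. -/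
theorem stmt3 (q : ℝ) (hq : 0 < q) (hq1 : q < 1) (x : ℂ) :
    qExpE (q : ℂ) x * qExpE (q : ℂ) (-x) =
      ∑' n : ℕ, ((q : ℂ)) ^ (n * (n - 1) / 2) * alSalamG (q : ℂ) (-1) n * x ^ n /
        qFact (q : ℂ) n := by
  have hnorm : ‖(q : ℂ)‖ < 1 := by rwa [Complex.norm_real, Real.norm_of_nonneg hq.le]
  have hq0 : (q : ℂ) ≠ 0 := Complex.ofReal_ne_zero.mpr hq.ne'
  rw [qExpE_eq_tsum_qExpTerm, qExpE_eq_tsum_qExpTerm,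
    tsum_mul_tsum_eq_tsum_sum_antidiagonal_of_summable_norm
      (summable_norm_qExpTerm hnorm x) (summable_norm_qExpTerm hnorm (-x))]
  refine tsum_congr fun n => ?_
  rw [← Nat.sum_antidiagonal_swap]
  simp only [Prod.fst_swap, Prod.snd_swap]
  rw [Nat.sum_antidiagonal_eq_sum_range_succ (fun k j => qExpTerm _ x j * qExpTerm _ (-x) k),
    alSalamG, mul_sum, sum_mul, sum_div]
  refine sum_congr rfl fun k hk => ?_
  obtain ⟨m, rfl⟩ := Nat.exists_eq_add_of_le' (Nat.lt_succ_iff.mp (mem_range.mp hk))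
  rw [Nat.add_sub_cancel]
  exact qExpTerm_mul_qExpTerm_neg hnorm hq0 x m k
end

section
/- Suppose α₀ > -1 satisfies q^{2(α₀+1)}(1-q)² < (1-q²)(1-q^{2α₀+2}). Then for all α ≥ α₀, the entire function F(t) = ∑_{k≥0}(-1)^k q^{2k(k+α)}(1-q)^{2k} t^{2k}/(2^{2k}(q²;q²)_k(q^{2α+2};q²)_k) has no zeros in the closed unit disk |t| ≤ 1; in particular F(t) > 0 for real t ∈ [-1,1]. -/
/-- The modified second Jackson q-Bessel function
`F(t) = ∑ (-1)^k q^{2k(k+α)} (1-q)^{2k} t^{2k} / (2^{2k}(q²;q²)_k(q^{2α+2};q²)_k)`. -/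
noncomputable def modJ2 (q α : ℝ) (t : ℂ) : ℂ :=
  ∑' k : ℕ, (-1) ^ k * (((q ^ (2 * k * ((k : ℝ) + α)) : ℝ)) : ℂ) *
      ((1 : ℂ) - q) ^ (2 * k) * t ^ (2 * k) /
    (2 ^ (2 * k) * qPoch ((q : ℂ) ^ 2) ((q : ℂ) ^ 2) k *
      qPoch (((q ^ (2 * α + 2) : ℝ) : ℂ)) ((q : ℂ) ^ 2) k)

/-! The coefficients `c_k` of `F(t) = ∑ (-1)^k c_k t^{2k}` have ratios `c_{k+1}/c_k` that decrease
in `k` and in `α`, so `c_k ≤ r^k` where `r` is the ratio `c_1/c_0` taken at `α₀`; the hypothesis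
says exactly `r < 1/4`. Hence `‖F(t) - 1‖ ≤ r/(1-r) < 1` on the closed unit disk, which rules out
zeros there and forces `Re F(t) > 0`. -/

theorem norm_tsum_sub_zero_le_of_le_geometric {E : Type*} [NormedAddCommGroup E] [CompleteSpace E]
    {f : ℕ → E} {r : ℝ} (hr : r < 1) (hf : ∀ n, ‖f n‖ ≤ r ^ n) :
    ‖∑' n, f n - f 0‖ ≤ r / (1 - r) := by
  have hr0 : 0 ≤ r := by simpa using (norm_nonneg _).trans (hf 1)
  have htail : HasSum (fun n ↦ r ^ (n + 1)) (r / (1 - r)) := by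
    simpa [pow_succ', div_eq_mul_inv] using (hasSum_geometric_of_lt_one hr0 hr).mul_left r
  rw [(Summable.of_norm_bounded (summable_geometric_of_lt_one hr0 hr) hf).tsum_eq_zero_add,
    add_sub_cancel_left]
  exact tsum_of_norm_bounded htail fun n ↦ hf (n + 1)

theorem norm_tsum_sub_one_lt_one {f : ℕ → ℂ} {r : ℝ} (hr : r < 1 / 2) (hf0 : f 0 = 1)
    (hf : ∀ n, ‖f n‖ ≤ r ^ n) : ‖∑' n, f n - 1‖ < 1 := by
  have hr1 : 0 < 1 - r := by linarith
  calc ‖∑' n, f n - 1‖ ≤ r / (1 - r) :=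
        hf0 ▸ norm_tsum_sub_zero_le_of_le_geometric (by linarith) hf
    _ < 1 := by rw [div_lt_one hr1]; linarith

noncomputable def realQPoch (a q : ℝ) (n : ℕ) : ℝ := ∏ k ∈ Finset.range n, (1 - a * q ^ k)

@[simp, norm_cast]
theorem ofReal_realQPoch (a q : ℝ) (n : ℕ) : (realQPoch a q n : ℂ) = qPoch a q n := by
  simp [realQPoch, qPoch]

theorem one_sub_mul_pow_pos {a q : ℝ} (ha : a < 1) (hq : 0 ≤ q) (hq1 : q ≤ 1) (k : ℕ) :
    0 < 1 - a * q ^ k := by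
  rcases le_or_gt a 0 with ha0 | ha0
  · nlinarith [pow_nonneg hq k]
  · nlinarith [pow_le_one₀ hq hq1 (n := k)]

theorem realQPoch_pos {a q : ℝ} (ha : a < 1) (hq : 0 ≤ q) (hq1 : q ≤ 1) (n : ℕ) :
    0 < realQPoch a q n :=
  Finset.prod_pos fun k _ ↦ one_sub_mul_pow_pos ha hq hq1 k

noncomputable def modJ2Coeff (q α : ℝ) (k : ℕ) : ℝ :=
  q ^ (2 * k * ((k : ℝ) + α)) * (1 - q) ^ (2 * k) /
    (2 ^ (2 * k) * realQPoch (q ^ 2) (q ^ 2) k * realQPoch (q ^ (2 * α + 2)) (q ^ 2) k)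

theorem modJ2_eq_tsum (q α : ℝ) (t : ℂ) :
    modJ2 q α t = ∑' k : ℕ, (-1) ^ k * (modJ2Coeff q α k : ℂ) * t ^ (2 * k) := by
  refine tsum_congr fun k ↦ ?_
  simp only [modJ2Coeff]
  push_cast
  ring

theorem modJ2_ofReal_im (q α t : ℝ) : (modJ2 q α t).im = 0 := by
  have hreal : modJ2 q α t = ((∑' k : ℕ, (-1) ^ k * modJ2Coeff q α k * t ^ (2 * k) : ℝ) : ℂ) := by
    rw [modJ2_eq_tsum, Complex.ofReal_tsum]
    push_cast
    rfl
  rw [hreal, Complex.ofReal_im]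

noncomputable def modJ2CoeffRatio (q α : ℝ) (k : ℕ) : ℝ :=
  q ^ (2 * (2 * (k : ℝ) + 1 + α)) * (1 - q) ^ 2 /
    (4 * (1 - q ^ 2 * (q ^ 2) ^ k) * (1 - q ^ (2 * α + 2) * (q ^ 2) ^ k))

section

variable {q α : ℝ}

theorem rpow_two_mul_add_two_lt_one (hq : 0 < q) (hq1 : q < 1) (hα : -1 < α) :
    q ^ (2 * α + 2) < 1 :=
  Real.rpow_lt_one hq.le hq1 (by linarith)

theorem modJ2Coeff_zero : modJ2Coeff q α 0 = 1 := by
  simp [modJ2Coeff, realQPoch]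

theorem modJ2Coeff_succ (hq : 0 < q) (hq1 : q < 1) (hα : -1 < α) (k : ℕ) :
    modJ2Coeff q α (k + 1) = modJ2CoeffRatio q α k * modJ2Coeff q α k := by
  have hq2 : q ^ 2 < 1 := by nlinarith
  have hqa := rpow_two_mul_add_two_lt_one hq hq1 hα
  have hP₁ := (realQPoch_pos hq2 (by positivity) hq2.le k).ne'
  have hP₂ := (realQPoch_pos hqa (by positivity) hq2.le k).ne'
  have hf₁ := (one_sub_mul_pow_pos hq2 (by positivity) hq2.le k).ne'
  have hf₂ := (one_sub_mul_pow_pos hqa (by positivity) hq2.le k).ne'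
  have hexp : q ^ (2 * ((k : ℝ) + 1) * ((k : ℝ) + 1 + α))
      = q ^ (2 * (2 * (k : ℝ) + 1 + α)) * q ^ (2 * (k : ℝ) * ((k : ℝ) + α)) := by
    rw [← Real.rpow_add hq]; ring_nf
  simp only [modJ2Coeff, modJ2CoeffRatio, realQPoch, Finset.prod_range_succ]
  push_cast
  rw [hexp]
  field_simp
  ring

theorem modJ2Coeff_pos (hq : 0 < q) (hq1 : q < 1) (hα : -1 < α) (k : ℕ) :
    0 < modJ2Coeff q α k := by
  have hq2 : q ^ 2 < 1 := by nlinarith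
  have hqa := rpow_two_mul_add_two_lt_one hq hq1 hα
  have := realQPoch_pos hq2 (by positivity) hq2.le k
  have := realQPoch_pos hqa (by positivity) hq2.le k
  have : 0 < 1 - q := by linarith
  unfold modJ2Coeff
  positivity

theorem modJ2CoeffRatio_le {β : ℝ} (hq : 0 < q) (hq1 : q < 1) (hα : -1 < α) (hαβ : α ≤ β)
    (k : ℕ) : modJ2CoeffRatio q β k ≤ modJ2CoeffRatio q α 0 := by
  have hq2 : q ^ 2 < 1 := by nlinarith
  have hqk : (q ^ 2) ^ k ≤ 1 := pow_le_one₀ (by positivity) hq2.le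
  have hqa := rpow_two_mul_add_two_lt_one hq hq1 hα
  have hqβ : q ^ (2 * β + 2) ≤ q ^ (2 * α + 2) :=
    Real.rpow_le_rpow_of_exponent_ge hq hq1.le (by linarith)
  have hnum : q ^ (2 * (2 * (k : ℝ) + 1 + β)) ≤ q ^ (2 * (2 * ((0 : ℕ) : ℝ) + 1 + α)) :=
    Real.rpow_le_rpow_of_exponent_ge hq hq1.le
      (by push_cast; linarith [(k.cast_nonneg : (0 : ℝ) ≤ k)])
  have hden₁ : 1 - q ^ 2 * (q ^ 2) ^ 0 ≤ 1 - q ^ 2 * (q ^ 2) ^ k := by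
    nlinarith [pow_nonneg (sq_nonneg q) k]
  have hden₂ : 1 - q ^ (2 * α + 2) * (q ^ 2) ^ 0 ≤ 1 - q ^ (2 * β + 2) * (q ^ 2) ^ k := by
    nlinarith [pow_nonneg (sq_nonneg q) k, Real.rpow_nonneg hq.le (2 * β + 2)]
  unfold modJ2CoeffRatio
  gcongr ?_ * _ / (_ * ?_ * ?_)
  · have := mul_pos (sub_pos.2 hq2) (sub_pos.2 hqa)
    simp only [pow_zero, mul_one]
    positivity
  · simpa using hqa.le
  · have := one_sub_mul_pow_pos hq2 (by positivity) hq2.le k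
    positivity

theorem modJ2CoeffRatio_zero_nonneg (hq : 0 < q) (hq1 : q < 1) (hα : -1 < α) :
    0 ≤ modJ2CoeffRatio q α 0 := by
  simpa [modJ2Coeff_succ hq hq1 hα, modJ2Coeff_zero] using (modJ2Coeff_pos hq hq1 hα 1).le

theorem modJ2Coeff_le_pow {β : ℝ} (hq : 0 < q) (hq1 : q < 1) (hα : -1 < α) (hαβ : α ≤ β)
    (k : ℕ) : modJ2Coeff q β k ≤ modJ2CoeffRatio q α 0 ^ k := by
  have hβ : -1 < β := hα.trans_le hαβ
  have hstep (j : ℕ) (_ : j < k) :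
      modJ2Coeff q β (j + 1) ≤ modJ2CoeffRatio q α 0 * modJ2Coeff q β j := by
    rw [modJ2Coeff_succ hq hq1 hβ]
    exact mul_le_mul_of_nonneg_right (modJ2CoeffRatio_le hq hq1 hα hαβ j)
      (modJ2Coeff_pos hq hq1 hβ j).le
  simpa [modJ2Coeff_zero] using le_geom (modJ2CoeffRatio_zero_nonneg hq hq1 hα) k hstep

theorem norm_modJ2_term_le {β : ℝ} (hq : 0 < q) (hq1 : q < 1) (hα : -1 < α) (hαβ : α ≤ β)
    {t : ℂ} (ht : ‖t‖ ≤ 1) (k : ℕ) :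
    ‖(-1) ^ k * (modJ2Coeff q β k : ℂ) * t ^ (2 * k)‖ ≤ modJ2CoeffRatio q α 0 ^ k := by
  have hc := (modJ2Coeff_pos hq hq1 (hα.trans_le hαβ) k).le
  calc ‖(-1) ^ k * (modJ2Coeff q β k : ℂ) * t ^ (2 * k)‖
        = modJ2Coeff q β k * ‖t‖ ^ (2 * k) := by simp [abs_of_nonneg hc]
    _ ≤ modJ2Coeff q β k := mul_le_of_le_one_right hc (pow_le_one₀ (norm_nonneg t) ht)
    _ ≤ modJ2CoeffRatio q α 0 ^ k := modJ2Coeff_le_pow hq hq1 hα hαβ k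

theorem modJ2CoeffRatio_zero_lt_quarter (hq : 0 < q) (hq1 : q < 1) (hα : -1 < α)
    (hcond : q ^ (2 * (α + 1)) * (1 - q) ^ 2 < (1 - q ^ 2) * (1 - q ^ (2 * α + 2))) :
    modJ2CoeffRatio q α 0 < 1 / 4 := by
  have hq2 : q ^ 2 < 1 := by nlinarith
  have hqa := rpow_two_mul_add_two_lt_one hq hq1 hα
  have hden : 0 < 4 * (1 - q ^ 2) * (1 - q ^ (2 * α + 2)) := by
    have := mul_pos (sub_pos.2 hq2) (sub_pos.2 hqa)
    positivity
  unfold modJ2CoeffRatio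
  rw [Nat.cast_zero, mul_zero, zero_add, add_comm 1 α, pow_zero, mul_one, mul_one,
    div_lt_iff₀ hden]
  linarith

end

/-- If `α₀ > -1` and `q^{2(α₀+1)}(1-q)² < (1-q²)(1-q^{2α₀+2})`, then for all `α ≥ α₀`
the function `F` has no zeros in the closed unit disk; in particular `F(t) > 0` for
real `t ∈ [-1,1]`. -/
theorem stmt18 (q α₀ : ℝ) (hq : 0 < q) (hq1 : q < 1) (hα₀ : -1 < α₀)
    (hcond : q ^ (2 * (α₀ + 1)) * (1 - q) ^ 2 < (1 - q ^ 2) * (1 - q ^ (2 * α₀ + 2)))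
    (α : ℝ) (hα : α₀ ≤ α) :
    (∀ t : ℂ, ‖t‖ ≤ 1 → modJ2 q α t ≠ 0) ∧
      ∀ t : ℝ, |t| ≤ 1 → 0 < (modJ2 q α (t : ℂ)).re ∧ (modJ2 q α (t : ℂ)).im = 0 := by
  have hr : modJ2CoeffRatio q α₀ 0 < 1 / 2 :=
    (modJ2CoeffRatio_zero_lt_quarter hq hq1 hα₀ hcond).trans (by norm_num)
  have hclose (t : ℂ) (ht : ‖t‖ ≤ 1) : ‖modJ2 q α t - 1‖ < 1 := by
    rw [modJ2_eq_tsum]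
    exact norm_tsum_sub_one_lt_one hr (by simp [modJ2Coeff_zero])
      (norm_modJ2_term_le hq hq1 hα₀ hα ht)
  refine ⟨fun t ht h0 ↦ by simpa [h0] using hclose t ht, fun t ht ↦ ⟨?_, modJ2_ofReal_im q α t⟩⟩
  have hre := (Complex.abs_re_le_norm _).trans_lt (hclose t (by simpa using ht))
  rw [Complex.sub_re, Complex.one_re, abs_lt] at hre
  linarith
end
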